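/- arXiv:1302.4249 — 2 statements merged into one kernel-verified Lean document; each statement's English description precedes it below -/
import Mathlib

section
/- Wilson's rank formula consequence for trivial kernel: let p be prime, t ≤ min(k, v-k), with base-p digits of t and k satisfying k_j = t_j for all j < t(p) and k_{t(p)} ≥ t_{t(p)}. Then the kernel of the transpose of the inclusion matrix W_{t,k} over the field ℤ/pℤ is {0}. -/
/-!
Let `f` be a function on the `t`-subsets of `V` whose sums over the `t`-subsets of every
`k`-subset vanish. Double counting shows that the `t`-subset sum of `f` over any `Y ⊆ V` is
annihilated by `C(#Y - t, k - t)`; for `k ≤ #Y ≤ t + k` this is `C(k - s, k - t)` with `s ≤ t`,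
which by Kummer's theorem is prime to `p`, since the digit hypotheses mean that `k - t` adds to
any number `≤ t` without a carry in base `p`. So those subset sums vanish. Finally, if `B` is a
`t`-set inside a `(t + k)`-set `V₀ ⊆ V`, inclusion–exclusion over `R ⊆ B` writes `f B` as an
alternating sum of the `t`-subset sums over `V₀ \ R`, all of which vanish.
-/

open Matrix Finset

namespace Nat

variable {p : ℕ}

theorem mod_pow_eq_of_forall_lt_digit_eq {m n : ℕ} :
    ∀ {L : ℕ}, (∀ j < L, m / p ^ j % p = n / p ^ j % p) → m % p ^ L = n % p ^ L
  | 0, _ => by simp [Nat.mod_one]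
  | L + 1, h => by
    rw [Nat.mod_pow_succ, Nat.mod_pow_succ, mod_pow_eq_of_forall_lt_digit_eq fun j hj ↦ h j
      (by omega), h L L.lt_succ_self]

theorem sub_mod_of_le_mod {k t q : ℕ} (h : t ≤ k % q) : (k - t) % q = k % q - t := by
  rcases Nat.eq_zero_or_pos q with rfl | hq
  · simp
  have hk : k - t = (k % q - t) + q * (k / q) := by have := Nat.mod_add_div k q; omega
  rw [hk, Nat.add_mul_mod_self_left, Nat.mod_eq_of_lt (by have := Nat.mod_lt k hq; omega)]

theorem sub_mod_pow_add_mod_pow_lt {t k a L : ℕ} (hp : 1 < p) (ht : t < p ^ (L + 1))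
    (hmod : k % p ^ L = t % p ^ L) (hle : t ≤ k % p ^ (L + 1)) (ha : a ≤ t) (i : ℕ) :
    (k - t) % p ^ i + a % p ^ i < p ^ i := by
  have hpi : 0 < p ^ i := pow_pos (by omega) i
  rcases le_or_gt i L with hiL | hLi
  · have hdvd : p ^ i ∣ k - t :=
      (pow_dvd_pow p hiL).trans (Nat.dvd_of_mod_eq_zero (Nat.sub_mod_eq_zero_of_mod_eq hmod))
    rw [Nat.mod_eq_zero_of_dvd hdvd, zero_add]
    exact Nat.mod_lt a hpi
  · have hdvd : p ^ (L + 1) ∣ p ^ i := pow_dvd_pow p hLi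
    have hti : t < p ^ i := ht.trans_le (Nat.le_of_dvd hpi hdvd)
    have hle' : t ≤ k % p ^ i := hle.trans (Nat.mod_mod_of_dvd k hdvd ▸ Nat.mod_le _ _)
    rw [sub_mod_of_le_mod hle', Nat.mod_eq_of_lt (ha.trans_lt hti)]
    have := Nat.mod_lt k hpi
    omega

theorem not_dvd_choose_sub_sub_of_digits {t k s : ℕ} (hp : p.Prime) (htk : t ≤ k) (hs : s ≤ t)
    (hlow : ∀ j < log p t, (digits p k).getD j 0 = (digits p t).getD j 0)
    (hlead : (digits p t).getD (log p t) 0 ≤ (digits p k).getD (log p t) 0) :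
    ¬ p ∣ (k - s).choose (k - t) := by
  set L := log p t
  simp only [getD_digits _ _ hp.two_le] at hlow hlead
  have ht : t < p ^ (L + 1) := lt_pow_succ_log_self hp.one_lt t
  have hmod : k % p ^ L = t % p ^ L := mod_pow_eq_of_forall_lt_digit_eq hlow
  have hle : t ≤ k % p ^ (L + 1) := by
    calc t = t % p ^ L + p ^ L * (t / p ^ L % p) := by rw [← Nat.mod_pow_succ, Nat.mod_eq_of_lt ht]
      _ ≤ k % p ^ (L + 1) := by rw [Nat.mod_pow_succ, hmod]; gcongr
  rw [← emultiplicity_eq_zero, show k - s = (t - s) + (k - t) by omega,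
    hp.emultiplicity_choose' (lt_add_one _), Nat.cast_eq_zero, Finset.card_eq_zero,
    filter_eq_empty_iff]
  intro i _
  exact not_le.mpr (sub_mod_pow_add_mod_pow_lt hp.one_lt ht hmod hle (Nat.sub_le t s) i)

end Nat

namespace Finset

variable {α : Type*} [DecidableEq α]

theorem sum_powersetCard_sum_powersetCard {M : Type*} [AddCommMonoid M] (Y : Finset α)
    {t k : ℕ} (htk : t ≤ k) (f : Finset α → M) :
    ∑ K ∈ Y.powersetCard k, ∑ T ∈ K.powersetCard t, f T
      = (#Y - t).choose (k - t) • ∑ T ∈ Y.powersetCard t, f T := by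
  rw [sum_comm' (t' := Y.powersetCard t) (s' := fun T ↦ (Y.powersetCard k).filter (T ⊆ ·))
    fun K T ↦ by simp only [mem_powersetCard, mem_filter]; grind, smul_sum]
  refine sum_congr rfl fun T hT ↦ ?_
  obtain ⟨hTY, rfl⟩ := mem_powersetCard.mp hT
  rw [sum_const, card_filter_powersetCard_subset T Y k hTY htk]

theorem sum_powerset_filter_disjoint_neg_one_pow (B T : Finset α) :
    ∑ R ∈ B.powerset with Disjoint T R, (-1 : ℤ) ^ #R = if B ⊆ T then 1 else 0 := by
  have : {R ∈ B.powerset | Disjoint T R} = (B \ T).powerset := by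
    ext R; simp only [mem_filter, mem_powerset, subset_sdiff, disjoint_comm]
  simp only [this, sum_powerset_neg_one_pow_card, sdiff_eq_empty_iff_subset]

theorem powersetCard_sdiff (V R : Finset α) (n : ℕ) :
    (V \ R).powersetCard n = {T ∈ V.powersetCard n | Disjoint T R} := by
  ext T; simp only [mem_powersetCard, mem_filter, subset_sdiff]; tauto

theorem sum_powerset_neg_one_pow_smul_sum_powersetCard_sdiff {M : Type*} [AddCommGroup M]
    {V B : Finset α} (hB : B ⊆ V) (f : Finset α → M) :
    ∑ R ∈ B.powerset, (-1 : ℤ) ^ #R • ∑ T ∈ (V \ R).powersetCard #B, f T = f B := by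
  simp_rw [powersetCard_sdiff, smul_sum, sum_filter]
  rw [sum_comm]
  calc ∑ T ∈ V.powersetCard #B, ∑ R ∈ B.powerset, (if Disjoint T R then (-1 : ℤ) ^ #R • f T else 0)
    _ = ∑ T ∈ V.powersetCard #B, (∑ R ∈ B.powerset with Disjoint T R, (-1 : ℤ) ^ #R) • f T := by
      simp only [sum_smul, sum_filter, ite_smul, zero_smul]
    _ = ∑ T ∈ V.powersetCard #B, if B = T then f T else 0 := by
      refine sum_congr rfl fun T hT ↦ ?_
      have hcard := (mem_powersetCard.mp hT).2
      have hBT : B ⊆ T ↔ B = T :=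
        ⟨fun h ↦ eq_of_subset_of_card_le h hcard.le, fun h ↦ h ▸ subset_rfl⟩
      simp only [sum_powerset_filter_disjoint_neg_one_pow, hBT, ite_smul, one_smul, zero_smul]
    _ = f B := by rw [sum_ite_eq, if_pos (mem_powersetCard.mpr ⟨hB, rfl⟩)]

section Vanishing

variable {R : Type*} [CommRing R] [NoZeroDivisors R] {V : Finset α} {t k : ℕ}
  {f : Finset α → R}

theorem sum_powersetCard_eq_zero_of_choose_ne_zero (htk : t ≤ k)
    (hf : ∀ K ∈ V.powersetCard k, ∑ T ∈ K.powersetCard t, f T = 0) {Y : Finset α} (hYV : Y ⊆ V)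
    (hC : ((#Y - t).choose (k - t) : R) ≠ 0) : ∑ T ∈ Y.powersetCard t, f T = 0 := by
  have hY : ∑ K ∈ Y.powersetCard k, ∑ T ∈ K.powersetCard t, f T = 0 :=
    sum_eq_zero fun K hK ↦ hf K (powersetCard_mono hYV hK)
  rw [sum_powersetCard_sum_powersetCard Y htk, nsmul_eq_mul] at hY
  exact (mul_eq_zero.mp hY).resolve_left hC

theorem eq_zero_of_forall_sum_powersetCard_eq_zero (htk : t ≤ k) (htv : t + k ≤ #V)
    (hC : ∀ s ≤ t, ((k - s).choose (k - t) : R) ≠ 0)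
    (hf : ∀ K ∈ V.powersetCard k, ∑ T ∈ K.powersetCard t, f T = 0) {B : Finset α}
    (hB : B ∈ V.powersetCard t) : f B = 0 := by
  obtain ⟨hBV, rfl⟩ := mem_powersetCard.mp hB
  obtain ⟨V₀, hBV₀, hV₀V, hV₀⟩ := exists_subsuperset_card_eq hBV (by omega) htv
  rw [← sum_powerset_neg_one_pow_smul_sum_powersetCard_sdiff hBV₀ f]
  refine sum_eq_zero fun S hS ↦ ?_
  have hSB : S ⊆ B := mem_powerset.mp hS
  have hcard : #(V₀ \ S) - #B = k - #S := by
    rw [card_sdiff_of_subset (hSB.trans hBV₀), hV₀]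
    have := card_le_card hSB
    omega
  rw [sum_powersetCard_eq_zero_of_choose_ne_zero htk hf (sdiff_subset.trans hV₀V)
    (hcard ▸ hC _ (card_le_card hSB)), smul_zero]

end Vanishing

end Finset

theorem vecMul_inclusion_apply {α R : Type*} [DecidableEq α] [NonAssocSemiring R]
    {V : Finset α} {t k : ℕ} (x : V.powersetCard t → R) (K : V.powersetCard k) :
    vecMul x (of fun (T : V.powersetCard t) (K : V.powersetCard k) ↦
        if (T : Finset α) ⊆ (K : Finset α) then (1 : R) else 0) K
      = ∑ T ∈ (K : Finset α).powersetCard t, Function.extend Subtype.val x 0 T := by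
  have hKV := (mem_powersetCard.mp K.2).1
  have hsub : (K : Finset α).powersetCard t = {T ∈ V.powersetCard t | T ⊆ (K : Finset α)} := by
    ext T; simp only [mem_powersetCard, mem_filter]
    exact ⟨fun h ↦ ⟨⟨h.1.trans hKV, h.2⟩, h.1⟩, fun h ↦ ⟨h.2, h.1.2⟩⟩
  rw [hsub, sum_filter, ← sum_coe_sort]
  simp only [vecMul, dotProduct, of_apply, mul_ite, mul_one, mul_zero,
    Subtype.val_injective.extend_apply]

/-- If the base-`p` digits of `k` agree with those of `t` below the leading digit of `t`
and the leading-position digit of `k` is at least that of `t`, then the kernel of the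
transpose of the inclusion matrix `W_{t,k}` over `ℤ/pℤ` is trivial. -/
theorem inclusion_matrix_kernel_trivial_mod_p {α : Type*} [DecidableEq α]
    (V : Finset α) (p t k : ℕ) (hp : p.Prime)
    (htk : t ≤ k) (htv : t + k ≤ V.card)
    (hlow : ∀ j < Nat.log p t, (Nat.digits p k).getD j 0 = (Nat.digits p t).getD j 0)
    (hlead : (Nat.digits p t).getD (Nat.log p t) 0 ≤ (Nat.digits p k).getD (Nat.log p t) 0)
    (x : ↥(V.powersetCard t) → ZMod p)
    (hx : Matrix.vecMul x (Matrix.of (fun (T : ↥(V.powersetCard t)) (K : ↥(V.powersetCard k)) =>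
      if (T : Finset α) ⊆ (K : Finset α) then (1 : ZMod p) else 0)) = 0) :
    x = 0 := by
  have : Fact p.Prime := ⟨hp⟩
  have hf : ∀ K ∈ V.powersetCard k,
      ∑ T ∈ K.powersetCard t, Function.extend Subtype.val x 0 T = 0 := fun K hK ↦ by
    rw [← vecMul_inclusion_apply x ⟨K, hK⟩, hx, Pi.zero_apply]
  have hC : ∀ s ≤ t, ((k - s).choose (k - t) : ZMod p) ≠ 0 := fun s hs ↦
    (ZMod.natCast_eq_zero_iff _ p).not.mpr
      (Nat.not_dvd_choose_sub_sub_of_digits hp htk hs hlow hlead)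
  funext B
  rw [← Subtype.val_injective.extend_apply x 0 B]
  exact eq_zero_of_forall_sum_powersetCard_eq_zero htk htv hC hf B.2
end

section
/- Let k be an integer with 3 ≤ k ≤ v-3. Let G and G' be graphs on the same vertex set V of size v. If for every k-element subset K of V, the number of 3-homogeneous subsets of G|_K equals the number of 3-homogeneous subsets of G'|_K, then G and G' have exactly the same 3-homogeneous subsets (i.e., a 3-element set is homogeneous in G iff it is homogeneous in G'). -/
/-!
Let `d S` be the difference of the indicators of "`S` is homogeneous in `G`" and "in `G'`". The
hypothesis says that `d` sums to zero over the 3-subsets of every `k`-set. Each 3-subset of an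
`(m + 1)`-set `L` lies in `m - 2` of the `m`-subsets of `L`, so by double counting the sums vanish on
all sets of size at least `k`. Inclusion–exclusion over the subsets `A` of a 3-set `T` inside a
`(k + 3)`-set `L` then expresses `d T` through the sums over the sets `L \ A`, all of size `≥ k`.
-/

/-- A 3-element subset is homogeneous in `G` if it induces a complete or an empty graph. -/
def IsHomog3 {V : Type*} (G : SimpleGraph V) (S : Finset V) : Prop :=
  S.card = 3 ∧ ((∀ x ∈ S, ∀ y ∈ S, x ≠ y → G.Adj x y) ∨ (∀ x ∈ S, ∀ y ∈ S, ¬ G.Adj x y))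

/-- Number of 3-homogeneous subsets of the induced subgraph of `G` on `K`. -/
def homog3CountOn {V : Type*} [DecidableEq V] (G : SimpleGraph V) [DecidableRel G.Adj]
    (K : Finset V) : ℕ :=
  ((K.powersetCard 3).filter
    (fun S => (∀ x ∈ S, ∀ y ∈ S, x ≠ y → G.Adj x y) ∨ (∀ x ∈ S, ∀ y ∈ S, ¬ G.Adj x y))).card

open Finset

namespace Finset

variable {α M : Type*} [DecidableEq α]

theorem sum_powersetCard_sum_powersetCard_s15 [AddCommMonoid M] (d : Finset α → M) (L : Finset α)
    {t m : ℕ} (htm : t ≤ m) :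
    ∑ K ∈ L.powersetCard m, ∑ S ∈ K.powersetCard t, d S
      = (#L - t).choose (m - t) • ∑ S ∈ L.powersetCard t, d S := by
  rw [sum_comm' (t' := L.powersetCard t) (s' := fun S => {K ∈ L.powersetCard m | S ⊆ K})]
  · rw [smul_sum]
    refine sum_congr rfl fun S hS => ?_
    obtain ⟨hSL, rfl⟩ := mem_powersetCard.1 hS
    rw [sum_const, card_filter_powersetCard_subset S L m hSL htm]
  · intro K S
    simp only [mem_filter, mem_powersetCard]
    constructor
    · rintro ⟨⟨hKL, rfl⟩, hSK, hS⟩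
      exact ⟨⟨⟨hKL, rfl⟩, hSK⟩, hSK.trans hKL, hS⟩
    · rintro ⟨⟨⟨hKL, rfl⟩, hSK⟩, -, hS⟩
      exact ⟨⟨hKL, rfl⟩, hSK, hS⟩

theorem sum_powersetCard_eq_zero_of_le [AddCommMonoid M] [IsAddTorsionFree M]
    {d : Finset α → M} {t k : ℕ} (htk : t ≤ k)
    (h : ∀ K : Finset α, #K = k → ∑ S ∈ K.powersetCard t, d S = 0)
    {L : Finset α} (hL : k ≤ #L) :
    ∑ S ∈ L.powersetCard t, d S = 0 := by
  obtain ⟨m, hkm, hLm⟩ : ∃ m, k ≤ m ∧ #L = m := ⟨_, hL, rfl⟩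
  clear hL
  induction m, hkm using Nat.le_induction generalizing L with
  | base => exact h L hLm
  | succ m hkm ih =>
    have hsum := sum_powersetCard_sum_powersetCard_s15 d L (htk.trans hkm)
    rw [sum_eq_zero fun K hK => ih (mem_powersetCard.1 hK).2, hLm, eq_comm] at hsum
    exact (nsmul_eq_zero_iff_right (Nat.choose_pos (by omega)).ne').1 hsum

theorem sum_powerset_neg_one_pow_smul_sum_powersetCard_sdiff_s15 [AddCommGroup M]
    (d : Finset α → M) {T L : Finset α} (hTL : T ⊆ L) :
    ∑ A ∈ T.powerset, (-1 : ℤ) ^ #A • ∑ S ∈ (L \ A).powersetCard #T, d S = d T := by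
  calc ∑ A ∈ T.powerset, (-1 : ℤ) ^ #A • ∑ S ∈ (L \ A).powersetCard #T, d S
      = ∑ S ∈ L.powersetCard #T, ∑ A ∈ (T \ S).powerset, (-1 : ℤ) ^ #A • d S := by
        simp_rw [smul_sum]
        refine sum_comm' fun A S => ?_
        simp only [mem_powerset, mem_powersetCard, subset_sdiff, disjoint_comm]
        tauto
    _ = ∑ S ∈ L.powersetCard #T, if T ⊆ S then d S else 0 := by
        simp_rw [← sum_smul, sum_powerset_neg_one_pow_card, sdiff_eq_empty_iff_subset, ite_smul,
          one_smul, zero_smul]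
    _ = d T := by
        rw [sum_eq_single_of_mem T (mem_powersetCard.2 ⟨hTL, rfl⟩), if_pos subset_rfl]
        intro S hS hST
        exact if_neg fun hTS => hST (eq_of_subset_of_card_le hTS (mem_powersetCard.1 hS).2.le).symm

theorem eq_zero_of_forall_sum_powersetCard_eq_zero_s15 [Fintype α] [AddCommGroup M]
    [IsAddTorsionFree M] {d : Finset α → M} {t k : ℕ} (htk : t ≤ k)
    (hkα : k + t ≤ Fintype.card α)
    (h : ∀ K : Finset α, #K = k → ∑ S ∈ K.powersetCard t, d S = 0)
    {T : Finset α} (hT : #T = t) : d T = 0 := by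
  subst hT
  obtain ⟨L, hTL, -, hL⟩ :=
    exists_subsuperset_card_eq (subset_univ T) (Nat.le_add_left #T k) (by simpa using hkα)
  rw [← sum_powerset_neg_one_pow_smul_sum_powersetCard_sdiff_s15 d hTL]
  refine sum_eq_zero fun A hA => ?_
  have hAT := mem_powerset.1 hA
  rw [sum_powersetCard_eq_zero_of_le htk h, smul_zero]
  rw [card_sdiff_of_subset (hAT.trans hTL), hL]
  have := card_le_card hAT
  omega

end Finset

theorem homog3CountOn_eq_sum {V : Type*} [DecidableEq V] (G : SimpleGraph V)
    [DecidableRel G.Adj] [DecidablePred (IsHomog3 G)] (K : Finset V) :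
    (homog3CountOn G K : ℤ) = ∑ S ∈ K.powersetCard 3, if IsHomog3 G S then 1 else 0 := by
  rw [homog3CountOn, ← natCast_card_filter]
  congr 2
  refine filter_congr fun S hS => ?_
  simp [IsHomog3, (mem_powersetCard.1 hS).2]

/-- If the numbers of 3-homogeneous subsets of `G` and `G'` agree on every `k`-set,
`3 ≤ k ≤ v - 3`, then `G` and `G'` have the same 3-homogeneous subsets. -/
theorem same_homog3_of_counts {V : Type*} [Fintype V] [DecidableEq V]
    (G G' : SimpleGraph V) [DecidableRel G.Adj] [DecidableRel G'.Adj]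
    (k : ℕ) (hk3 : 3 ≤ k) (hkv : k + 3 ≤ Fintype.card V)
    (h : ∀ K : Finset V, K.card = k → homog3CountOn G K = homog3CountOn G' K) :
    ∀ S : Finset V, IsHomog3 G S ↔ IsHomog3 G' S := by
  classical
  intro S
  by_cases hS : #S = 3
  · let d : Finset V → ℤ := fun T =>
      (if IsHomog3 G T then 1 else 0) - if IsHomog3 G' T then 1 else 0
    have hd : d S = 0 := by
      refine eq_zero_of_forall_sum_powersetCard_eq_zero_s15 hk3 hkv (fun K hK => ?_) hS
      rw [sum_sub_distrib, ← homog3CountOn_eq_sum, ← homog3CountOn_eq_sum, h K hK, sub_self]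
    simp only [d] at hd
    split_ifs at hd <;> simp_all
  · simp [IsHomog3, hS]
end
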